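/- arXiv:2511.17107 — 5 statements merged into one kernel-verified Lean document; each statement's English description precedes it below -/
import Mathlib

section
/- Let 𝒜, ℳ ∈ ℂ^{n×n} and ℬ ∈ ℂ^{m×n} with ℬ𝒜 = 0 and ℳ Hermitian positive definite, and let γ > 0. Then the multiset of nonzero eigenvalues of 𝒜ℳ𝒜† + γℬ†ℬ equals the union (as multisets) of the nonzero eigenvalues of 𝒜ℳ𝒜† and γ times the nonzero eigenvalues of ℬ†ℬ. -/
/-!
Since `ℬ𝒜 = 0`, the product `P Q` of `P = 𝒜ℳ𝒜†` and `Q = γℬ†ℬ` vanishes, so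
`(X - P)(X - Q) = X (X - (P + Q))`. Taking determinants,
`χ_P χ_Q = X ^ n χ_{P+Q}`: away from `0` the roots of `χ_{P+Q}` are those of `χ_P` together with
those of `χ_Q`, and the roots of `χ_{γℬ†ℬ}` are `γ` times those of `χ_{ℬ†ℬ}`.
-/

open Matrix Polynomial
open scoped ComplexOrder

theorem sub_mul_sub_eq_mul_sub_add {α : Type*} [Ring α] {s p q : α} (hps : Commute p s)
    (hpq : p * q = 0) : (s - p) * (s - q) = s * (s - (p + q)) := by
  simp only [sub_mul, mul_sub, mul_add, hpq, hps.eq]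
  abel

namespace Matrix

variable {n : Type*} [Fintype n] [DecidableEq n]

theorem charpoly_mul_charpoly_of_mul_eq_zero {R : Type*} [CommRing R] {P Q : Matrix n n R}
    (hPQ : P * Q = 0) :
    P.charpoly * Q.charpoly = X ^ Fintype.card n * (P + Q).charpoly := by
  have hPQ' : (C : R →+* R[X]).mapMatrix P * (C : R →+* R[X]).mapMatrix Q = 0 := by
    rw [← map_mul, hPQ, map_zero]
  have hchar : charmatrix P * charmatrix Q = scalar n X * charmatrix (P + Q) := by
    simp only [charmatrix, map_add]
    exact sub_mul_sub_eq_mul_sub_add (scalar_commute X (fun _ => Commute.all _ _) _).symm hPQ'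
  rw [charpoly, charpoly, charpoly, ← det_mul, hchar, det_mul]
  simp

theorem charpoly_smul_comp {R : Type*} [CommRing R] (c : R) (Q : Matrix n n R) :
    (c • Q).charpoly.comp (C c * X) = C (c ^ Fintype.card n) * Q.charpoly := by
  have hchar : (eval₂RingHom C (C c * X)).mapMatrix (charmatrix (c • Q))
      = C c • charmatrix Q := by
    ext i j
    by_cases h : i = j
    · subst h; simp [mul_sub]
    · simp [charmatrix_apply_ne _ _ _ h]
  change eval₂RingHom C (C c * X) (charmatrix (c • Q)).det = _
  rw [RingHom.map_det, hchar, det_smul, ← C_pow]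
  rfl

theorem roots_charpoly_smul {K : Type*} [Field K] [IsAlgClosed K] (c : K) (Q : Matrix n n K) :
    (c • Q).charpoly.roots = Q.charpoly.roots.map (c * ·) := by
  rcases eq_or_ne c 0 with rfl | hc
  · simp [charpoly_zero, Multiset.map_const', IsAlgClosed.card_roots_eq_natDegree,
      Multiset.nsmul_singleton]
  · have h := congrArg roots (charpoly_smul_comp c Q)
    rw [roots_C_mul _ (pow_ne_zero _ hc)] at h
    rw [← h, ← map_roots_comp_C_mul_X_add_C _ c 0 hc.isUnit]
    simp

theorem filter_roots_charpoly_add_of_mul_eq_zero {K : Type*} [Field K] [DecidableEq K]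
    {P Q : Matrix n n K} (hPQ : P * Q = 0) :
    (P + Q).charpoly.roots.filter (· ≠ 0)
      = P.charpoly.roots.filter (· ≠ 0) + Q.charpoly.roots.filter (· ≠ 0) := by
  have hroots := congrArg roots (charpoly_mul_charpoly_of_mul_eq_zero hPQ)
  rw [roots_mul ((charpoly_monic P).mul (charpoly_monic Q)).ne_zero,
    roots_mul ((monic_X_pow _).mul (charpoly_monic _)).ne_zero, roots_X_pow] at hroots
  have hfilter := congrArg (Multiset.filter (· ≠ 0)) hroots
  simp only [Multiset.filter_add] at hfilter
  have hzero : (Fintype.card n • ({0} : Multiset K)).filter (· ≠ 0) = 0 :=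
    Multiset.filter_eq_nil.mpr (by simp [Multiset.nsmul_singleton, Multiset.mem_replicate])
  rw [hfilter, hzero, zero_add]

end Matrix

theorem kernel_compensation_spectrum_general (n m : ℕ) [DecidableEq ℂ]
    (A M : Matrix (Fin n) (Fin n) ℂ) (B : Matrix (Fin m) (Fin n) ℂ)
    (hBA : B * A = 0) (γ : ℝ) :
    ((A * M * Aᴴ + (γ : ℂ) • (Bᴴ * B)).charpoly.roots.filter (· ≠ 0))
      = ((A * M * Aᴴ).charpoly.roots.filter (· ≠ 0))
        + (((Bᴴ * B).charpoly.roots.map (fun μ => (γ : ℂ) * μ)).filter (· ≠ 0)) := by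
  have hAB : Aᴴ * Bᴴ = 0 := by rw [← conjTranspose_mul, hBA, conjTranspose_zero]
  have hPQ : A * M * Aᴴ * ((γ : ℂ) • (Bᴴ * B)) = 0 := by
    rw [Matrix.mul_smul, Matrix.mul_assoc, ← Matrix.mul_assoc Aᴴ, hAB, Matrix.zero_mul,
      Matrix.mul_zero, smul_zero]
  rw [filter_roots_charpoly_add_of_mul_eq_zero hPQ, roots_charpoly_smul]

/-- Kernel compensation: if ℬ𝒜 = 0 and ℳ is HPD, then for γ > 0 the multiset of nonzero
eigenvalues (roots of the characteristic polynomial) of 𝒜ℳ𝒜† + γℬ†ℬ is the union of the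
nonzero eigenvalues of 𝒜ℳ𝒜† and γ times the nonzero eigenvalues of ℬ†ℬ. -/
theorem kernel_compensation_spectrum (n m : ℕ) [DecidableEq ℂ]
    (A M : Matrix (Fin n) (Fin n) ℂ) (B : Matrix (Fin m) (Fin n) ℂ)
    (hBA : B * A = 0) (hM : M.PosDef) (γ : ℝ) (hγ : 0 < γ) :
    ((A * M * Aᴴ + (γ : ℂ) • (Bᴴ * B)).charpoly.roots.filter (· ≠ 0))
      = ((A * M * Aᴴ).charpoly.roots.filter (· ≠ 0))
        + (((Bᴴ * B).charpoly.roots.map (fun μ => (γ : ℂ) * μ)).filter (· ≠ 0)) :=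
  kernel_compensation_spectrum_general n m A M B hBA γ
end

section
/- Under the conditions 0 < |k| ≤ π and h = 1/N < 1/π, the minimum eigenvalue of the circulant matrix K†K, where K = D₁ + i k D₀ as above, equals k². -/
/-!
With `S` the cyclic shift, `K = N (1 - S) + (i k / 2) (1 + S)`, and `Sᴴ = S ^ (N - 1)`, so `K†K`
is a polynomial in `S`. By spectral mapping its eigenvalues are `|N (1 - z) + (i k / 2) (1 + z)|²`
for the `N`-th roots of unity `z = e^{2iu}`, `u = π j / N`, and this equals
`(k cos u - 2 N sin u)²`. The root `z = 1` gives `k²`. For `1 ≤ j ≤ N - 1`, write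
`k = 2 N tan ψ`; the inequality `(k cos u - 2 N sin u)² ≥ k²` becomes
`sin² (u - ψ) - sin² ψ = sin u · sin (u - 2ψ) ≥ 0`, which holds because
`|2ψ| ≤ |k| / N ≤ π / N ≤ u ≤ π - π / N` (using `|arctan x| ≤ |x|` and `|k| ≤ π`).
-/

open Matrix Complex Polynomial ComplexConjugate

namespace Matrix

section Circulant

variable {n R : Type*} [AddCommGroup n] [DecidableEq n]

lemma circulant_single_one_mulVec [Fintype n] [Semiring R] (a : n) (w : n → R) :
    circulant (Pi.single a 1) *ᵥ w = fun i => w (i - a) := by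
  funext i
  rw [mulVec, dotProduct, Fintype.sum_eq_single (i - a)]
  · simp
  · intro j hj
    have : i - j ≠ a := fun h => hj (by rw [← h, sub_sub_cancel])
    simp [circulant_apply, this]

lemma circulant_single_one_mul [Fintype n] [Semiring R] (a b : n) :
    circulant (Pi.single a (1 : R)) * circulant (Pi.single b 1) =
      circulant (Pi.single (a + b) 1) := by
  rw [circulant_mul, circulant_single_one_mulVec]
  congr 1
  funext i
  simp only [Pi.single_apply, sub_eq_iff_eq_add']

lemma circulant_single_one_pow [Fintype n] [Semiring R] (a : n) (m : ℕ) :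
    circulant (Pi.single a (1 : R)) ^ m = circulant (Pi.single (m • a) 1) := by
  induction m with
  | zero => simp
  | succ m ih => rw [pow_succ, ih, circulant_single_one_mul, succ_nsmul]

lemma conjTranspose_circulant_single_one [Semiring R] [StarRing R] (a : n) :
    (circulant (Pi.single a (1 : R)))ᴴ = circulant (Pi.single (-a) 1) := by
  rw [conjTranspose_circulant]
  congr 1
  funext i
  simp [Pi.single_apply, neg_eq_iff_eq_neg, apply_ite star]

end Circulant

variable (R : Type*) (N : ℕ) [NeZero N]

def cyclicShift [Zero R] [One R] : Matrix (Fin N) (Fin N) R :=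
  circulant (Pi.single 1 1)

open Fin.NatCast in
lemma cyclicShift_pow_card [Semiring R] : cyclicShift R N ^ N = 1 := by
  simp [cyclicShift, circulant_single_one_pow]

open Fin.NatCast in
lemma conjTranspose_cyclicShift [Semiring R] [StarRing R] :
    (cyclicShift R N)ᴴ = cyclicShift R N ^ (N - 1) := by
  rw [cyclicShift, conjTranspose_circulant_single_one, circulant_single_one_pow]
  congr 2
  refine (eq_neg_of_add_eq_zero_left ?_).symm
  rw [← succ_nsmul, Nat.sub_add_cancel NeZero.one_le]
  simp

-- For `N = 1` the literal `(1 : Fin N)` wraps around to `0`, hence `2 ≤ N`.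
lemma circulant_ite_val_eq_smul_one_add_smul_cyclicShift [Semiring R] (hN : 2 ≤ N) (a b : R) :
    circulant (fun i : Fin N => if i.val = 0 then a else if i.val = 1 then b else 0) =
      a • 1 + b • cyclicShift R N := by
  have h1 : (1 : Fin N).val = 1 := Nat.mod_eq_of_lt hN
  rw [cyclicShift, ← circulant_single_one, ← circulant_smul, ← circulant_smul,
    ← circulant_add]
  congr 1
  funext i
  simp only [Pi.add_apply, Pi.smul_apply, Pi.single_apply, Fin.ext_iff, Fin.val_zero, h1]
  split_ifs <;> simp_all

lemma one_mem_spectrum_cyclicShift [Field R] : (1 : R) ∈ spectrum R (cyclicShift R N) := by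
  rw [← spectrum_toLin']
  refine Module.End.HasEigenvalue.mem_spectrum
    (Module.End.hasEigenvalue_of_hasEigenvector (x := fun _ => 1) ⟨?_, ?_⟩)
  · simp [cyclicShift, circulant_single_one_mulVec]
  · exact Function.ne_iff.mpr ⟨0, one_ne_zero⟩

end Matrix

lemma Complex.pow_sub_one_eq_conj_of_pow_eq_one {N : ℕ} (hN : N ≠ 0) {z : ℂ}
    (hz : z ^ N = 1) :
    z ^ (N - 1) = conj z := by
  have hz1 : ‖z‖ = 1 := by
    refine (pow_eq_one_iff_of_nonneg (norm_nonneg z) hN).mp ?_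
    rw [← norm_pow, hz, norm_one]
  have hz0 : z ≠ 0 := by rintro rfl; simp [hN] at hz
  apply mul_left_cancel₀ hz0
  rw [← pow_succ', Nat.sub_add_cancel (Nat.one_le_iff_ne_zero.mpr hN), hz, mul_conj,
    normSq_eq_norm_sq, hz1]
  simp

lemma spectrum.pow_eq_one_of_pow_eq_one {𝕜 A : Type*} [Field 𝕜] [Ring A] [Algebra 𝕜 A]
    [Nontrivial A] {s : A} {N : ℕ} (hpow : s ^ N = 1) {z : 𝕜} (hz : z ∈ spectrum 𝕜 s) :
    z ^ N = 1 := by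
  simpa [hpow, spectrum.one_eq] using spectrum.pow_mem_pow s N hz

lemma spectrum_star_mul_self_smul_one_add_smul {A : Type*} [Ring A] [StarRing A] [Algebra ℂ A]
    [StarModule ℂ A] [Nontrivial A] {s : A} {N : ℕ} (hN : N ≠ 0) (hpow : s ^ N = 1)
    (hstar : star s = s ^ (N - 1)) (hσ : (spectrum ℂ s).Nonempty) (a b : ℂ) :
    spectrum ℂ (star (a • 1 + b • s) * (a • 1 + b • s)) =
      (fun z => (normSq (a + b * z) : ℂ)) '' spectrum ℂ s := by
  have hpoly : star (a • 1 + b • s) * (a • 1 + b • s) =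
      aeval s ((C (conj a) + C (conj b) * X ^ (N - 1)) * (C a + C b * X)) := by
    simp only [map_mul, map_add, aeval_C, aeval_X, map_pow, star_add, star_smul, star_one, hstar,
      Algebra.algebraMap_eq_smul_one, smul_one_mul, Complex.star_def]
  rw [hpoly, spectrum.map_polynomial_aeval_of_nonempty s _ hσ]
  refine Set.image_congr fun z hz => ?_
  simp only [eval_mul, eval_add, eval_C, eval_pow, eval_X,
    Complex.pow_sub_one_eq_conj_of_pow_eq_one hN (spectrum.pow_eq_one_of_pow_eq_one hpow hz)]
  rw [normSq_eq_conj_mul_self, map_add, map_mul]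

namespace Real

lemma abs_arctan_le (x : ℝ) : |arctan x| ≤ |x| := by
  have key : ∀ y : ℝ, 0 ≤ y → arctan y ≤ y := fun y hy => by
    simpa using le_tan (arctan_nonneg.mpr hy) (arctan_lt_pi_div_two y)
  rcases le_total 0 x with hx | hx
  · rw [abs_of_nonneg (arctan_nonneg.mpr hx), abs_of_nonneg hx]
    exact key x hx
  · rw [abs_of_nonpos (arctan_le_zero.mpr hx), abs_of_nonpos hx, ← arctan_neg]
    exact key (-x) (neg_nonneg.mpr hx)

lemma sin_sq_le_sin_sub_sq {ψ u : ℝ} (h₁ : 2 * |ψ| ≤ u) (h₂ : u ≤ π - 2 * |ψ|) :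
    sin ψ ^ 2 ≤ sin (u - ψ) ^ 2 := by
  have hdiff : sin (u - ψ) ^ 2 - sin ψ ^ 2 = sin u * sin (u - 2 * ψ) := by
    have hsq : ∀ a b : ℝ, sin a ^ 2 - sin b ^ 2 = sin (a + b) * sin (a - b) := fun a b => by
      rw [sin_add, sin_sub]
      linear_combination sin b ^ 2 * sin_sq_add_cos_sq a - sin a ^ 2 * sin_sq_add_cos_sq b
    rw [hsq]
    ring_nf
  have hψ := neg_abs_le ψ
  have hψ' := le_abs_self ψ
  nlinarith [sin_nonneg_of_nonneg_of_le_pi (x := u) (by linarith) (by linarith),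
    sin_nonneg_of_nonneg_of_le_pi (x := u - 2 * ψ) (by linarith) (by linarith)]

lemma sq_le_mul_cos_sub_mul_sin_sq {c k u : ℝ} (hc : 0 < c) (h₁ : 2 * |k| / c ≤ u)
    (h₂ : u ≤ π - 2 * |k| / c) : k ^ 2 ≤ (k * cos u - c * sin u) ^ 2 := by
  set ψ := arctan (k / c)
  have hcos : 0 < cos ψ := cos_arctan_pos _
  have hk : k * cos ψ = c * sin ψ := by
    have := tan_arctan (k / c)
    rw [tan_eq_sin_div_cos, div_eq_div_iff hcos.ne' hc.ne'] at this
    linarith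
  have hψ : 2 * |ψ| ≤ 2 * |k| / c := by
    have : |ψ| ≤ |k / c| := abs_arctan_le _
    rw [abs_div, abs_of_pos hc] at this
    rw [mul_div_assoc]
    linarith
  have hsin := sin_sq_le_sin_sub_sq (ψ := ψ) (u := u) (by linarith) (by linarith)
  have e₁ : (k * cos ψ) ^ 2 = c ^ 2 * sin ψ ^ 2 := by rw [hk]; ring
  have e₂ : ((k * cos u - c * sin u) * cos ψ) ^ 2 = c ^ 2 * sin (u - ψ) ^ 2 := by
    rw [sin_sub]
    linear_combination cos u * (cos u * (k * cos ψ + c * sin ψ) - 2 * c * sin u * cos ψ) * hk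
  have : k ^ 2 * cos ψ ^ 2 ≤ (k * cos u - c * sin u) ^ 2 * cos ψ ^ 2 := by
    rw [← mul_pow, ← mul_pow, e₁, e₂]; gcongr
  exact le_of_mul_le_mul_right this (by positivity)

end Real

namespace Complex

lemma normSq_mul_one_sub_exp_add_mul_one_add_exp (c k u : ℝ) :
    normSq (c / 2 * (1 - exp (2 * u * I)) + k / 2 * I * (1 + exp (2 * u * I))) =
      (k * Real.cos u - c * Real.sin u) ^ 2 := by
  have hfactor : (c : ℂ) / 2 * (1 - exp (2 * u * I)) + k / 2 * I * (1 + exp (2 * u * I)) =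
      I * exp (u * I) * ((k * Real.cos u - c * Real.sin u : ℝ) : ℂ) := by
    rw [show 2 * (u : ℂ) * I = u * I + u * I by ring, exp_add, exp_mul_I]
    push_cast
    linear_combination
      (c / 2 + k / 2 * I) * (sin (u : ℂ) ^ 2 * I_sq - sin_sq_add_cos_sq (u : ℂ))
  rw [hfactor, normSq_mul, normSq_mul, normSq_I, normSq_eq_norm_sq, norm_exp_ofReal_mul_I,
    normSq_ofReal]
  ring

lemma sq_le_normSq_of_pow_eq_one {N : ℕ} [NeZero N] {k : ℝ} (hk : |k| ≤ Real.pi) {z : ℂ}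
    (hz : z ^ N = 1) : k ^ 2 ≤ normSq (N * (1 - z) + k / 2 * I * (1 + z)) := by
  obtain ⟨j, hjN, rfl⟩ := (isPrimitiveRoot_exp N (NeZero.ne N)).eq_pow_of_pow_eq_one hz
  rcases Nat.eq_zero_or_pos j with rfl | hj
  · norm_num [normSq_apply, sq]
  have hNpos : (0 : ℝ) < N := by exact_mod_cast Nat.pos_of_neZero N
  have hu : exp (2 * Real.pi * I / N) ^ j = exp (2 * ((Real.pi * j / N : ℝ) : ℂ) * I) := by
    rw [← exp_nat_mul]
    push_cast
    ring_nf
  have hN2 : (N : ℂ) = ((2 * N : ℝ) : ℂ) / 2 := by push_cast; ring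
  rw [hu, hN2, normSq_mul_one_sub_exp_add_mul_one_add_exp]
  have hj1 : (1 : ℝ) ≤ j := by exact_mod_cast hj
  have hjN' : (j : ℝ) + 1 ≤ N := by exact_mod_cast hjN
  apply Real.sq_le_mul_cos_sub_mul_sin_sq (by positivity)
  · rw [mul_div_mul_left _ _ two_ne_zero]
    gcongr
    nlinarith [Real.pi_pos]
  · rw [mul_div_mul_left _ _ two_ne_zero, le_sub_iff_add_le, ← add_div, div_le_iff₀ hNpos]
    nlinarith [Real.pi_pos]

end Complex

theorem min_eigenvalue_KdaggerK_general (N : ℕ) (h k : ℝ)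
    (hkpi : |k| ≤ Real.pi)
    (hhN : h = 1 / N) (hh : h < 1 / Real.pi) (hh0 : 0 < h)
    (D1 D0 K : Matrix (Fin N) (Fin N) ℂ)
    (hD1 : D1 = Matrix.circulant
      (fun i : Fin N => if i.val = 0 then (1 / h : ℂ) else if i.val = 1 then -(1 / h : ℂ) else 0))
    (hD0 : D0 = Matrix.circulant
      (fun i : Fin N => if i.val = 0 then (1 / 2 : ℂ) else if i.val = 1 then (1 / 2 : ℂ) else 0))
    (hK : K = D1 + ((k : ℂ) * Complex.I) • D0)
    (hH : (Kᴴ * K).IsHermitian) :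
    IsLeast (Set.range hH.eigenvalues) (k ^ 2) := by
  have hN : 2 ≤ N := by
    rw [hhN] at hh0 hh
    have hpiN : Real.pi < N := (one_div_lt_one_div (one_div_pos.mp hh0) Real.pi_pos).mp hh
    have h3N : 3 < N := by exact_mod_cast Real.pi_gt_three.trans hpiN
    omega
  have : NeZero N := ⟨by omega⟩
  have hinv : (1 / h : ℂ) = N := by rw [hhN]; push_cast; simp
  set S := cyclicShift ℂ N
  set a : ℂ := N + k / 2 * I
  set b : ℂ := -N + k / 2 * I
  have hKS : K = a • 1 + b • S := by
    rw [hK, hD1, hD0, circulant_ite_val_eq_smul_one_add_smul_cyclicShift ℂ N hN,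
      circulant_ite_val_eq_smul_one_add_smul_cyclicShift ℂ N hN, hinv]
    module
  have hS1 : (1 : ℂ) ∈ spectrum ℂ S := one_mem_spectrum_cyclicShift ℂ N
  have hrange : Set.range hH.eigenvalues = (fun z => normSq (a + b * z)) '' spectrum ℂ S := by
    rw [← hH.spectrum_real_eq_range_eigenvalues, ← spectrum.preimage_algebraMap ℂ,
      ← star_eq_conjTranspose, hKS, spectrum_star_mul_self_smul_one_add_smul (NeZero.ne N)
        (cyclicShift_pow_card ℂ N) (conjTranspose_cyclicShift ℂ N) ⟨1, hS1⟩]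
    ext x
    simp [S]
  rw [hrange]
  refine ⟨⟨1, hS1, by norm_num [a, b, normSq_apply, sq]⟩, ?_⟩
  rintro _ ⟨z, hz, rfl⟩
  have hzN := spectrum.pow_eq_one_of_pow_eq_one (cyclicShift_pow_card ℂ N) hz
  convert sq_le_normSq_of_pow_eq_one hkpi hzN using 2
  ring

/-- Under 0 < |k| ≤ π and h = 1/N < 1/π, the minimum eigenvalue of K†K,
where K = D₁ + i k D₀, equals k². -/
theorem min_eigenvalue_KdaggerK (N : ℕ) (h k : ℝ)
    (hk0 : 0 < |k|) (hkpi : |k| ≤ Real.pi)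
    (hhN : h = 1 / N) (hh : h < 1 / Real.pi) (hh0 : 0 < h)
    (D1 D0 K : Matrix (Fin N) (Fin N) ℂ)
    (hD1 : D1 = Matrix.circulant
      (fun i : Fin N => if i.val = 0 then (1 / h : ℂ) else if i.val = 1 then -(1 / h : ℂ) else 0))
    (hD0 : D0 = Matrix.circulant
      (fun i : Fin N => if i.val = 0 then (1 / 2 : ℂ) else if i.val = 1 then (1 / 2 : ℂ) else 0))
    (hK : K = D1 + ((k : ℂ) * Complex.I) • D0)
    (hH : (Kᴴ * K).IsHermitian) :
    IsLeast (Set.range hH.eigenvalues) (k ^ 2) :=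
  min_eigenvalue_KdaggerK_general N h k hkpi hhN hh hh0 D1 D0 K hD1 hD0 hK hH
end

section
/- Let ε = (ε_{ij}) ∈ ℂ^{m×m} be Hermitian positive definite and tridiagonal (ε_{ij} = 0 for |i−j| > 1). Let S_{ij} ∈ ℂ^{N×N} for 1 ≤ i ≤ j ≤ m satisfy S_{ii} = I_N, S_{ji} = S_{ij}†, and ‖S_{ij}‖₂ ≤ 1. Then the mN×mN block matrix M with (i,j)-block ε_{ij} S_{ij} is Hermitian positive definite. -/
open Matrix
open scoped ComplexOrder

/-- The spectral norm (operator norm induced by the Euclidean norm) of a square matrix. -/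
noncomputable def specNorm {α : Type*} [Fintype α] [DecidableEq α]
    (M : Matrix α α ℂ) : ℝ :=
  ‖Matrix.toEuclideanCLM (𝕜 := ℂ) M‖

/-!
Conjugating the tridiagonal matrix `ε` by a diagonal unitary `diag(u₁, …, uₘ)`, with the phases
`uᵢ` chosen one after another along the path `1 – 2 – ⋯ – m`, turns every off-diagonal entry
into `-|εᵢⱼ|`. Hence the matrix `C` with diagonal `εᵢᵢ` and off-diagonal entries `-|εᵢⱼ|` is again
positive definite. For `x` with blocks `xᵢ ∈ ℂᴺ` and `aᵢ = ‖xᵢ‖`, the bound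
`|xᵢ† Sᵢⱼ xⱼ| ≤ aᵢ aⱼ` gives `Re (x† M x) ≥ a† C a`, which is positive when `x ≠ 0`.
-/

open ComplexConjugate Complex

theorem exists_norm_eq_one_conj_mul_mul_succ_eq_neg_norm (d : ℕ → ℂ) :
    ∃ u : ℕ → ℂ, (∀ n, ‖u n‖ = 1) ∧ ∀ n, conj (u n) * d n * u (n + 1) = -‖d n‖ := by
  let u : ℕ → ℂ := fun n => n.rec 1 fun k v => -v * exp (↑(-(d k).arg) * I)
  have hu : ∀ n, ‖u n‖ = 1 := by
    intro n
    induction n with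
    | zero => simp [u]
    | succ n ih =>
      change ‖-u n * exp (↑(-(d n).arg) * I)‖ = 1
      rw [norm_mul, norm_neg, ih, norm_exp_ofReal_mul_I, one_mul]
  refine ⟨u, hu, fun n => ?_⟩
  have hd : d n * exp (↑(-(d n).arg) * I) = ‖d n‖ := by
    calc d n * exp (↑(-(d n).arg) * I)
        = ‖d n‖ * (exp ((d n).arg * I) * exp (↑(-(d n).arg) * I)) := by
          rw [← mul_assoc, norm_mul_exp_arg_mul_I]
      _ = ‖d n‖ := by rw [← Complex.exp_add]; simp
  calc conj (u n) * d n * u (n + 1)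
      = -(conj (u n) * u n) * (d n * exp (↑(-(d n).arg) * I)) := by
        simp only [u]; ring
    _ = -‖d n‖ := by rw [conj_mul', hu, hd]; simp

noncomputable def Matrix.negNormOffDiag {ι : Type*} [DecidableEq ι] (A : Matrix ι ι ℂ) :
    Matrix ι ι ℂ :=
  fun i j => if i = j then A i j else -‖A i j‖

theorem Matrix.IsHermitian.exists_diagonal_conjTranspose_mul_mul_eq_negNormOffDiag {m : ℕ}
    {ε : Matrix (Fin m) (Fin m) ℂ} (hε : ε.IsHermitian)
    (htri : ∀ i j : Fin m, (i.val + 1 < j.val ∨ j.val + 1 < i.val) → ε i j = 0) :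
    ∃ u : Fin m → ℂ, (∀ i, u i ≠ 0) ∧ (diagonal u)ᴴ * ε * diagonal u = negNormOffDiag ε := by
  obtain ⟨v, hv_norm, hv⟩ := exists_norm_eq_one_conj_mul_mul_succ_eq_neg_norm
    fun n => if h : n + 1 < m then ε ⟨n, by omega⟩ ⟨n + 1, h⟩ else 0
  let u : Fin m → ℂ := fun i => v i
  have hu_norm : ∀ i, ‖u i‖ = 1 := fun i => hv_norm i
  have hsucc : ∀ i j : Fin m, j.val = i.val + 1 → conj (u i) * ε i j * u j = -‖ε i j‖ := by
    rintro ⟨i, hi⟩ ⟨j, hj⟩ (rfl : j = i + 1)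
    simpa [hj] using hv i
  refine ⟨u, fun i => norm_ne_zero_iff.mp ((hu_norm i).trans_ne one_ne_zero), ?_⟩
  ext i j
  rw [mul_diagonal, diagonal_conjTranspose, diagonal_mul, negNormOffDiag]
  simp only [Pi.star_apply, star_def]
  rcases lt_trichotomy (i : ℕ) j with hij | hij | hij
  · rw [if_neg (Fin.ne_of_lt hij)]
    rcases Nat.lt_or_ge ((i : ℕ) + 1) j with hfar | hnext
    · simp [htri i j (.inl hfar)]
    · exact hsucc i j (by omega)
  · obtain rfl := Fin.ext hij
    rw [if_pos rfl, mul_right_comm, conj_mul', hu_norm]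
    simp
  · rw [if_neg (Fin.ne_of_gt hij)]
    rcases Nat.lt_or_ge ((j : ℕ) + 1) i with hfar | hnext
    · simp [htri i j (.inr hfar)]
    · rw [← hε.apply i j, star_def, norm_conj]
      calc conj (u i) * conj (ε j i) * u j = conj (conj (u j) * ε j i * u i) := by
            simp only [map_mul, conj_conj]; ring
        _ = -‖ε j i‖ := by rw [hsucc j i (by omega)]; simp

theorem Matrix.PosDef.posDef_negNormOffDiag {m : ℕ} {ε : Matrix (Fin m) (Fin m) ℂ}
    (hε : ε.PosDef)
    (htri : ∀ i j : Fin m, (i.val + 1 < j.val ∨ j.val + 1 < i.val) → ε i j = 0) :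
    (negNormOffDiag ε).PosDef := by
  obtain ⟨u, hu, hconj⟩ :=
    hε.isHermitian.exists_diagonal_conjTranspose_mul_mul_eq_negNormOffDiag htri
  rw [← hconj]
  refine hε.conjTranspose_mul_mul_same fun x y hxy => funext fun i => ?_
  exact mul_left_cancel₀ (hu i) (by simpa only [mulVec_diagonal] using congrFun hxy i)

section Blocks

variable {ι κ : Type*}

theorem isHermitian_of_blocks {ε : Matrix ι ι ℂ} (hε : ε.IsHermitian)
    {S : ι → ι → Matrix κ κ ℂ} (hS : ∀ i j, S j i = (S i j)ᴴ) {M : Matrix (ι × κ) (ι × κ) ℂ}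
    (hM : ∀ p q, M p q = ε p.1 q.1 * S p.1 q.1 p.2 q.2) : M.IsHermitian := by
  ext p q
  rw [conjTranspose_apply, hM, hM, star_mul', hS p.1 q.1, conjTranspose_apply, star_star,
    hε.apply p.1 q.1]

variable [Fintype κ]

theorem star_dotProduct_self_eq_norm_sq (v : κ → ℂ) :
    star v ⬝ᵥ v = (‖WithLp.toLp 2 v‖ : ℂ) ^ 2 := by
  rw [dotProduct_comm, ← EuclideanSpace.inner_toLp_toLp, inner_self_eq_norm_sq_to_K]
  rfl

theorem norm_star_dotProduct_mulVec_le [DecidableEq κ] (A : Matrix κ κ ℂ) (u v : κ → ℂ) :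
    ‖star u ⬝ᵥ A *ᵥ v‖ ≤ specNorm A * (‖WithLp.toLp 2 u‖ * ‖WithLp.toLp 2 v‖) := by
  rw [dotProduct_comm, ← EuclideanSpace.inner_toLp_toLp, ← toEuclideanCLM_toLp, specNorm]
  calc _ ≤ ‖WithLp.toLp 2 u‖ * ‖toEuclideanCLM (𝕜 := ℂ) A (WithLp.toLp 2 v)‖ :=
        norm_inner_le_norm _ _
    _ ≤ ‖WithLp.toLp 2 u‖ * (‖toEuclideanCLM (𝕜 := ℂ) A‖ * ‖WithLp.toLp 2 v‖) := by
        gcongr; exact (toEuclideanCLM (𝕜 := ℂ) A).le_opNorm _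
    _ = _ := by ring

theorem star_dotProduct_mulVec_eq_sum_blocks [Fintype ι] (ε : Matrix ι ι ℂ)
    (S : ι → ι → Matrix κ κ ℂ)
    {M : Matrix (ι × κ) (ι × κ) ℂ} (hM : ∀ p q, M p q = ε p.1 q.1 * S p.1 q.1 p.2 q.2)
    (x : ι × κ → ℂ) :
    star x ⬝ᵥ M *ᵥ x =
      ∑ i, ∑ j, ε i j * (star (Function.curry x i) ⬝ᵥ S i j *ᵥ Function.curry x j) := by
  simp only [dotProduct, mulVec, Pi.star_apply, Fintype.sum_prod_type, hM, Finset.mul_sum,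
    Function.curry_apply]
  refine Finset.sum_congr rfl fun i _ => ?_
  rw [Finset.sum_comm]
  exact Finset.sum_congr rfl fun j _ => Finset.sum_congr rfl fun k _ =>
    Finset.sum_congr rfl fun l _ => by ring

noncomputable def blockNorm (x : ι × κ → ℂ) (i : ι) : ℝ :=
  ‖WithLp.toLp 2 (Function.curry x i)‖

theorem blockNorm_ne_zero {x : ι × κ → ℂ} (hx : x ≠ 0) :
    (fun i => (blockNorm x i : ℂ)) ≠ 0 := by
  obtain ⟨⟨i, k⟩, hik⟩ := Function.ne_iff.mp hx
  refine Function.ne_iff.mpr ⟨i, ?_⟩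
  rw [Pi.zero_apply, ofReal_ne_zero, blockNorm, norm_ne_zero_iff, Ne, WithLp.toLp_eq_zero]
  exact fun h => hik (congrFun h k)

theorem re_star_mul_negNormOffDiag_mul_le [DecidableEq ι] [DecidableEq κ] (ε : Matrix ι ι ℂ)
    {S : ι → ι → Matrix κ κ ℂ} (hSii : ∀ i, S i i = 1) (hSnorm : ∀ i j, specNorm (S i j) ≤ 1)
    (x : ι × κ → ℂ) (i j : ι) :
    (star (blockNorm x i : ℂ) * (negNormOffDiag ε i j * blockNorm x j)).re ≤
      (ε i j * (star (Function.curry x i) ⬝ᵥ S i j *ᵥ Function.curry x j)).re := by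
  rw [star_def, conj_ofReal, negNormOffDiag]
  split_ifs with hij
  · subst hij
    rw [hSii, one_mulVec, star_dotProduct_self_eq_norm_sq, ← blockNorm]
    exact le_of_eq (congrArg re (by ring))
  · have hc := (norm_star_dotProduct_mulVec_le (S i j) (Function.curry x i)
      (Function.curry x j)).trans (mul_le_of_le_one_left (by positivity) (hSnorm i j))
    calc (↑(blockNorm x i) * (-↑‖ε i j‖ * ↑(blockNorm x j)) : ℂ).re
        = -(‖ε i j‖ * (blockNorm x i * blockNorm x j)) := by
          simp only [← ofReal_neg, ← ofReal_mul, ofReal_re]; ring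
      _ ≤ -‖ε i j * (star (Function.curry x i) ⬝ᵥ S i j *ᵥ Function.curry x j)‖ := by
          rw [norm_mul]; gcongr; exact hc
      _ ≤ _ := neg_le_of_abs_le (abs_re_le_norm _)

theorem re_star_dotProduct_negNormOffDiag_mulVec_le [Fintype ι] [DecidableEq ι] [DecidableEq κ]
    (ε : Matrix ι ι ℂ) {S : ι → ι → Matrix κ κ ℂ} (hSii : ∀ i, S i i = 1)
    (hSnorm : ∀ i j, specNorm (S i j) ≤ 1) {M : Matrix (ι × κ) (ι × κ) ℂ}
    (hM : ∀ p q, M p q = ε p.1 q.1 * S p.1 q.1 p.2 q.2) (x : ι × κ → ℂ) :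
    (star (fun i => (blockNorm x i : ℂ)) ⬝ᵥ negNormOffDiag ε *ᵥ fun i => (blockNorm x i : ℂ)).re
      ≤ (star x ⬝ᵥ M *ᵥ x).re := by
  rw [star_dotProduct_mulVec_eq_sum_blocks ε S hM x, dotProduct, re_sum, re_sum]
  refine Finset.sum_le_sum fun i _ => ?_
  rw [Pi.star_apply, mulVec, dotProduct, Finset.mul_sum, re_sum, re_sum]
  exact Finset.sum_le_sum fun j _ => re_star_mul_negNormOffDiag_mul_le ε hSii hSnorm x i j

end Blocks

/-- If ε is HPD and tridiagonal, S_ii = I, S_ji = S_ij†, ‖S_ij‖₂ ≤ 1, then the block matrix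
M with (i,j)-block ε_ij S_ij is Hermitian positive definite. -/
theorem block_tridiagonal_HPD (m N : ℕ)
    (ε : Matrix (Fin m) (Fin m) ℂ) (hPD : ε.PosDef)
    (htri : ∀ i j : Fin m, (i.val + 1 < j.val ∨ j.val + 1 < i.val) → ε i j = 0)
    (S : Fin m → Fin m → Matrix (Fin N) (Fin N) ℂ)
    (hSii : ∀ i, S i i = 1)
    (hSsym : ∀ i j, S j i = (S i j)ᴴ)
    (hSnorm : ∀ i j, specNorm (S i j) ≤ 1)
    (M : Matrix (Fin m × Fin N) (Fin m × Fin N) ℂ)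
    (hM : ∀ p q, M p q = ε p.1 q.1 * S p.1 q.1 p.2 q.2) :
    M.PosDef := by
  have hM_herm : M.IsHermitian := isHermitian_of_blocks hPD.isHermitian hSsym hM
  refine .of_dotProduct_mulVec_pos hM_herm fun x hx => ?_
  have hpos := (hPD.posDef_negNormOffDiag htri).re_dotProduct_pos (blockNorm_ne_zero hx)
  exact RCLike.pos_iff.mpr ⟨hpos.trans_le (re_star_dotProduct_negNormOffDiag_mulVec_le ε hSii
    hSnorm hM x), hM_herm.im_star_dotProduct_mulVec_self x⟩
end

section
/- Let ε = (ε_{ij}) ∈ ℂ^{m×m} be a Hermitian matrix that is strictly diagonally dominant with real positive diagonal: ε_{ii} > Σ_{j≠i} |ε_{ij}| for all i. Let S_{ij} ∈ ℂ^{N×N} (1 ≤ i < j ≤ m) satisfy ‖S_{ij}‖₁ ≤ 1 and ‖S_{ij}‖_∞ ≤ 1, and form the mN×mN block matrix M with diagonal blocks M_{ii} Hermitian whose diagonal entries are ≥ ε_{ii} and whose off-diagonal entries vanish, and off-diagonal blocks M_{ij} = ε_{ij} S_{ij}, M_{ji} = M_{ij}†. Then M is strictly diagonally dominant with positive diagonal,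 hence Hermitian positive definite by Gershgorin's theorem. -/
open Matrix
open scoped ComplexOrder

/-- Maximum absolute row sum norm of a matrix. -/
noncomputable def rowSumNorm {α β : Type*} [Fintype α] [Fintype β]
    (M : Matrix α β ℂ) : ℝ :=
  ⨆ i : α, ∑ j : β, ‖M i j‖

/-- Maximum absolute column sum norm of a matrix. -/
noncomputable def colSumNorm {α β : Type*} [Fintype α] [Fintype β]
    (M : Matrix α β ℂ) : ℝ :=
  ⨆ j : β, ∑ i : α, ‖M i j‖

/-!
Within a row `(i, s)` of `M`, the own block `i` contributes only the diagonal entry `D i s`,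
and every other block `j` contributes at most `‖ε i j‖`, because `S i j` has row sums and
`S j i` has column sums at most `1`. Hence `M` inherits strict diagonal dominance from `ε`,
and Gershgorin's theorem puts every (real) eigenvalue of the Hermitian matrix `M` in a disc
centred at some `M p p > 0` with radius less than `M p p`, so all eigenvalues are positive.
-/

theorem Matrix.IsHermitian.posDef_of_sum_norm_erase_lt {𝕜 n : Type*} [RCLike 𝕜] [Fintype n]
    [DecidableEq n] {A : Matrix n n 𝕜} (hA : A.IsHermitian)
    (h : ∀ i, ∑ j ∈ Finset.univ.erase i, ‖A i j‖ < RCLike.re (A i i)) : A.PosDef := by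
  refine hA.posDef_iff_eigenvalues_pos.mpr fun i => ?_
  have hμ : Module.End.HasEigenvalue (toLin' A) (hA.eigenvalues i : 𝕜) := by
    rw [Module.End.hasEigenvalue_iff_mem_spectrum, spectrum_toLin']
    exact spectrum.algebraMap_mem 𝕜 (hA.eigenvalues_mem_spectrum_real i)
  obtain ⟨k, hk⟩ := eigenvalue_mem_ball hμ
  rw [mem_closedBall_iff_norm'] at hk
  have hre : RCLike.re (A k k) - hA.eigenvalues i ≤ ‖A k k - hA.eigenvalues i‖ := by
    simpa using RCLike.re_le_norm (A k k - hA.eigenvalues i)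
  linarith [h k]

theorem sum_norm_row_le_rowSumNorm {α β : Type*} [Fintype α] [Fintype β]
    (A : Matrix α β ℂ) (i : α) : ∑ j, ‖A i j‖ ≤ rowSumNorm A :=
  le_ciSup (f := fun i => ∑ j, ‖A i j‖) (Set.finite_range _).bddAbove i

theorem sum_norm_col_le_colSumNorm {α β : Type*} [Fintype α] [Fintype β]
    (A : Matrix α β ℂ) (j : β) : ∑ i, ‖A i j‖ ≤ colSumNorm A :=
  le_ciSup (f := fun j => ∑ i, ‖A i j‖) (Set.finite_range _).bddAbove j

theorem Finset.sum_erase_prod_eq_sum_erase_fst {ι κ M : Type*} [Fintype ι] [Fintype κ]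
    [DecidableEq ι] [DecidableEq κ] [AddCommGroup M] (f : ι × κ → M) (i : ι) (s : κ)
    (hf : ∀ t ≠ s, f (i, t) = 0) :
    ∑ q ∈ univ.erase (i, s), f q = ∑ j ∈ univ.erase i, ∑ t, f (j, t) := by
  have hrow : ∑ t, f (i, t) = f (i, s) := Fintype.sum_eq_single s hf
  rw [Finset.sum_erase_eq_sub (mem_univ _), Fintype.sum_prod_type,
    ← Finset.add_sum_erase _ _ (mem_univ i), hrow, add_sub_cancel_left]

section HermitianBlockMatrix

variable {ι κ : Type*} [LinearOrder ι] [DecidableEq κ]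

def hermitianBlockMatrix (ε : Matrix ι ι ℂ) (S : ι → ι → Matrix κ κ ℂ) (D : ι → κ → ℝ) :
    Matrix (ι × κ) (ι × κ) ℂ :=
  of fun p q =>
    if p.1 = q.1 then (if p.2 = q.2 then ((D p.1 p.2 : ℝ) : ℂ) else 0)
    else if p.1 < q.1 then ε p.1 q.1 * S p.1 q.1 p.2 q.2
    else star (ε q.1 p.1 * S q.1 p.1 q.2 p.2)

variable (ε : Matrix ι ι ℂ) (S : ι → ι → Matrix κ κ ℂ) (D : ι → κ → ℝ)

@[simp]
theorem hermitianBlockMatrix_apply_self (p : ι × κ) :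
    hermitianBlockMatrix ε S D p p = D p.1 p.2 := by
  simp [hermitianBlockMatrix]

theorem hermitianBlockMatrix_apply_of_ne (i : ι) {s t : κ} (h : s ≠ t) :
    hermitianBlockMatrix ε S D (i, s) (i, t) = 0 := by
  simp [hermitianBlockMatrix, h]

theorem isHermitian_hermitianBlockMatrix : (hermitianBlockMatrix ε S D).IsHermitian := by
  refine IsHermitian.ext fun ⟨i, s⟩ ⟨j, t⟩ => ?_
  rcases lt_trichotomy i j with hij | rfl | hij
  · simp [hermitianBlockMatrix, hij.ne, hij.ne', hij, hij.not_gt]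
  · rcases eq_or_ne s t with rfl | hst
    · simp
    · simp [hermitianBlockMatrix, hst, hst.symm]
  · simp [hermitianBlockMatrix, hij.ne, hij.ne', hij, hij.not_gt]

variable {ε S}

theorem sum_norm_hermitianBlockMatrix_le [Fintype κ] (hε : ε.IsHermitian)
    (hS : ∀ i j, i < j → colSumNorm (S i j) ≤ 1 ∧ rowSumNorm (S i j) ≤ 1)
    {i j : ι} (hji : j ≠ i) (s : κ) :
    ∑ t, ‖hermitianBlockMatrix ε S D (i, s) (j, t)‖ ≤ ‖ε i j‖ := by
  rcases hji.lt_or_gt with hji | hij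
  · have hnorm : ‖ε j i‖ = ‖ε i j‖ := by
      rw [← hε.apply i j, norm_star]
    calc ∑ t, ‖hermitianBlockMatrix ε S D (i, s) (j, t)‖
        = ‖ε j i‖ * ∑ t, ‖S j i t s‖ := by
          simp [hermitianBlockMatrix, hji.ne', hji.not_gt, Finset.mul_sum]
      _ ≤ ‖ε j i‖ * 1 := by
          gcongr
          exact (sum_norm_col_le_colSumNorm _ s).trans (hS j i hji).1
      _ = ‖ε i j‖ := by rw [mul_one, hnorm]
  · calc ∑ t, ‖hermitianBlockMatrix ε S D (i, s) (j, t)‖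
        = ‖ε i j‖ * ∑ t, ‖S i j s t‖ := by
          simp [hermitianBlockMatrix, hij.ne, hij, Finset.mul_sum]
      _ ≤ ‖ε i j‖ * 1 := by
          gcongr
          exact (sum_norm_row_le_rowSumNorm _ s).trans (hS i j hij).2
      _ = ‖ε i j‖ := mul_one _

theorem sum_norm_erase_hermitianBlockMatrix_lt [Fintype ι] [Fintype κ] (hε : ε.IsHermitian)
    (hSDD : ∀ i, ∑ j ∈ Finset.univ.erase i, ‖ε i j‖ < (ε i i).re)
    (hS : ∀ i j, i < j → colSumNorm (S i j) ≤ 1 ∧ rowSumNorm (S i j) ≤ 1)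
    (hD : ∀ i s, (ε i i).re ≤ D i s) (p : ι × κ) :
    ∑ q ∈ Finset.univ.erase p, ‖hermitianBlockMatrix ε S D p q‖ <
      (hermitianBlockMatrix ε S D p p).re := by
  obtain ⟨i, s⟩ := p
  rw [Finset.sum_erase_prod_eq_sum_erase_fst (fun q => ‖hermitianBlockMatrix ε S D (i, s) q‖) i s
    fun t ht => by simp [hermitianBlockMatrix_apply_of_ne ε S D i ht.symm]]
  calc ∑ j ∈ Finset.univ.erase i, ∑ t, ‖hermitianBlockMatrix ε S D (i, s) (j, t)‖
      ≤ ∑ j ∈ Finset.univ.erase i, ‖ε i j‖ :=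
        Finset.sum_le_sum fun j hj =>
          sum_norm_hermitianBlockMatrix_le D hε hS (Finset.ne_of_mem_erase hj) s
    _ < (ε i i).re := hSDD i
    _ ≤ D i s := hD i s
    _ = (hermitianBlockMatrix ε S D (i, s) (i, s)).re := by simp

end HermitianBlockMatrix

theorem block_SDD_HPD_general (m N : ℕ)
    (ε : Matrix (Fin m) (Fin m) ℂ) (hεherm : ε.IsHermitian)
    (hSDD : ∀ i, ∑ j ∈ Finset.univ.erase i, ‖ε i j‖ < (ε i i).re)
    (S : Fin m → Fin m → Matrix (Fin N) (Fin N) ℂ)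
    (hSnorm : ∀ i j : Fin m, i < j →
      colSumNorm (S i j) ≤ 1 ∧ rowSumNorm (S i j) ≤ 1)
    (D : Fin m → Fin N → ℝ)
    (hD : ∀ i s, (ε i i).re ≤ D i s)
    (M : Matrix (Fin m × Fin N) (Fin m × Fin N) ℂ)
    (hMdef : ∀ p q, M p q =
      if p.1 = q.1 then (if p.2 = q.2 then ((D p.1 p.2 : ℝ) : ℂ) else 0)
      else if p.1 < q.1 then ε p.1 q.1 * S p.1 q.1 p.2 q.2
      else star (ε q.1 p.1 * S q.1 p.1 q.2 p.2)) :
    (∀ p, 0 < (M p p).re ∧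
        ∑ q ∈ Finset.univ.erase p, ‖M p q‖ < (M p p).re) ∧
      M.PosDef := by
  obtain rfl : M = hermitianBlockMatrix ε S D := Matrix.ext hMdef
  have hdom := sum_norm_erase_hermitianBlockMatrix_lt D hεherm hSDD hSnorm hD
  refine ⟨fun p => ⟨(Finset.sum_nonneg fun q _ => norm_nonneg _).trans_lt (hdom p), hdom p⟩, ?_⟩
  exact (isHermitian_hermitianBlockMatrix ε S D).posDef_of_sum_norm_erase_lt hdom

/-- If ε is Hermitian, strictly diagonally dominant with positive real diagonal, and the
blocks S_ij (i < j) have 1-norm and ∞-norm at most 1, then the block matrix M — with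
diagonal blocks real diagonal matrices whose entries are ≥ ε_ii, off-diagonal blocks
ε_ij S_ij and M_ji = M_ij† — is strictly diagonally dominant with positive diagonal,
hence Hermitian positive definite. -/
theorem block_SDD_HPD (m N : ℕ)
    (ε : Matrix (Fin m) (Fin m) ℂ) (hεherm : ε.IsHermitian)
    (hSDD : ∀ i, ∑ j ∈ Finset.univ.erase i, ‖ε i j‖ < (ε i i).re)
    (hpos : ∀ i, 0 < (ε i i).re)
    (S : Fin m → Fin m → Matrix (Fin N) (Fin N) ℂ)
    (hSnorm : ∀ i j : Fin m, i < j →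
      colSumNorm (S i j) ≤ 1 ∧ rowSumNorm (S i j) ≤ 1)
    (D : Fin m → Fin N → ℝ)
    (hD : ∀ i s, (ε i i).re ≤ D i s)
    (M : Matrix (Fin m × Fin N) (Fin m × Fin N) ℂ)
    (hMdef : ∀ p q, M p q =
      if p.1 = q.1 then (if p.2 = q.2 then ((D p.1 p.2 : ℝ) : ℂ) else 0)
      else if p.1 < q.1 then ε p.1 q.1 * S p.1 q.1 p.2 q.2
      else star (ε q.1 p.1 * S q.1 p.1 q.2 p.2)) :
    (∀ p, 0 < (M p p).re ∧
        ∑ q ∈ Finset.univ.erase p, ‖M p q‖ < (M p p).re) ∧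
      M.PosDef :=
  block_SDD_HPD_general m N ε hεherm hSDD S hSnorm D hD M hMdef
end

section
/- Let K_A, K_B ∈ ℂ^{n×n} with K_A K_A† + γ K_B Hermitian positive definite (γ > 0, K_B Hermitian positive semidefinite), and let M̂ ∈ ℂ^{n×n} be Hermitian positive definite. Then for every nonzero x ∈ ℂ^n, the generalized Rayleigh quotient ρ(x) = (x† K_A M̂ K_A† x + γ x† K_B x) / (‖K_A† x‖² + γ x† K_B x) satisfies λ_min(M̂) ≤ ρ(x) ≤ λ_max(M̂) whenever λ_min(M̂) ≤ 1 ≤ λ_max(M̂); consequently the condition number of the preconditioned matrix (K_A K_A† + γ K_B)^{-1}(K_A M̂ K_A† + γ K_B) is at most λ_max(M̂)/λ_min(M̂). -/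
open Matrix
open scoped ComplexOrder

lemma aux_dot_conj {n : ℕ} (A B : Matrix (Fin n) (Fin n) ℂ) (x : Fin n → ℂ) :
    star x ⬝ᵥ (A * B * Aᴴ) *ᵥ x = star (Aᴴ *ᵥ x) ⬝ᵥ B *ᵥ (Aᴴ *ᵥ x) := by
  rw [star_mulVec, conjTranspose_conjTranspose, ← dotProduct_mulVec,
    ← mulVec_mulVec, ← mulVec_mulVec]

lemma aux_herm_dot_im {n : ℕ} {A : Matrix (Fin n) (Fin n) ℂ} (hA : A.IsHermitian)
    (x : Fin n → ℂ) : (star x ⬝ᵥ A *ᵥ x).im = 0 := by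
  have h : star x ⬝ᵥ A *ᵥ x = star (star x ⬝ᵥ A *ᵥ x) := by
    conv_lhs => rw [star_dotProduct]
    congr 1
    rw [star_mulVec, ← dotProduct_mulVec, hA.eq]
  rw [Complex.star_def] at h
  exact Complex.conj_eq_iff_im.mp h.symm

lemma aux_sub_psd {n : ℕ} {M : Matrix (Fin n) (Fin n) ℂ} (hM : M.IsHermitian) {c : ℝ}
    (hc : ∀ i, c ≤ hM.eigenvalues i) : (M - (c : ℂ) • 1).PosSemidef := by
  have hU : (hM.eigenvectorUnitary : Matrix (Fin n) (Fin n) ℂ) *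
      star (hM.eigenvectorUnitary : Matrix (Fin n) (Fin n) ℂ) = 1 :=
    Matrix.mem_unitaryGroup_iff.mp hM.eigenvectorUnitary.2
  have key : M - (c : ℂ) • 1
      = (hM.eigenvectorUnitary : Matrix (Fin n) (Fin n) ℂ) *
          diagonal (fun i => ((hM.eigenvalues i - c : ℝ) : ℂ)) *
          ((hM.eigenvectorUnitary : Matrix (Fin n) (Fin n) ℂ))ᴴ := by
    have h1 : diagonal (fun i => ((hM.eigenvalues i - c : ℝ) : ℂ))
        = diagonal (RCLike.ofReal ∘ hM.eigenvalues) - (c : ℂ) • 1 := by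
      rw [smul_one_eq_diagonal, diagonal_sub]
      funext i
      push_cast
      rfl
    rw [h1, Matrix.mul_sub, Matrix.sub_mul, ← Matrix.star_eq_conjTranspose,
      ← Unitary.conjStarAlgAut_apply (S := ℂ) (u := hM.eigenvectorUnitary)
        (x := diagonal (RCLike.ofReal ∘ hM.eigenvalues)), ← hM.spectral_theorem]
    congr 1
    rw [Matrix.mul_smul, Matrix.smul_mul, mul_one, hU]
  rw [key]
  refine PosSemidef.mul_mul_conjTranspose_same ?_ _
  refine posSemidef_diagonal_iff.mpr fun i => ?_
  rw [Complex.zero_le_real]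
  linarith [hc i]

lemma aux_rayleigh_lb {n : ℕ} {M : Matrix (Fin n) (Fin n) ℂ} (hM : M.IsHermitian) {c : ℝ}
    (hc : ∀ i, c ≤ hM.eigenvalues i) (y : Fin n → ℂ) :
    c * (star y ⬝ᵥ y).re ≤ (star y ⬝ᵥ M *ᵥ y).re := by
  have h := (aux_sub_psd hM hc).re_dotProduct_nonneg y
  have hexp : star y ⬝ᵥ (M - (c : ℂ) • 1) *ᵥ y
      = star y ⬝ᵥ M *ᵥ y - (c : ℂ) * (star y ⬝ᵥ y) := by
    rw [Matrix.sub_mulVec, dotProduct_sub, smul_mulVec, one_mulVec,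
      dotProduct_smul, smul_eq_mul]
  rw [hexp] at h
  simp only [RCLike.re_to_complex, Complex.sub_re, Complex.mul_re, Complex.ofReal_re,
    Complex.ofReal_im, zero_mul, sub_zero] at h
  linarith

lemma aux_smul_sub_psd {n : ℕ} {M : Matrix (Fin n) (Fin n) ℂ} (hM : M.IsHermitian) {C : ℝ}
    (hC : ∀ i, hM.eigenvalues i ≤ C) : ((C : ℂ) • 1 - M).PosSemidef := by
  have hU : (hM.eigenvectorUnitary : Matrix (Fin n) (Fin n) ℂ) *
      star (hM.eigenvectorUnitary : Matrix (Fin n) (Fin n) ℂ) = 1 :=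
    Matrix.mem_unitaryGroup_iff.mp hM.eigenvectorUnitary.2
  have key : (C : ℂ) • 1 - M
      = (hM.eigenvectorUnitary : Matrix (Fin n) (Fin n) ℂ) *
          diagonal (fun i => ((C - hM.eigenvalues i : ℝ) : ℂ)) *
          ((hM.eigenvectorUnitary : Matrix (Fin n) (Fin n) ℂ))ᴴ := by
    have h1 : diagonal (fun i => ((C - hM.eigenvalues i : ℝ) : ℂ))
        = (C : ℂ) • 1 - diagonal (RCLike.ofReal ∘ hM.eigenvalues) := by
      rw [smul_one_eq_diagonal, diagonal_sub]
      funext i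
      push_cast
      rfl
    rw [h1, Matrix.mul_sub, Matrix.sub_mul, ← Matrix.star_eq_conjTranspose,
      ← Unitary.conjStarAlgAut_apply (S := ℂ) (u := hM.eigenvectorUnitary)
        (x := diagonal (RCLike.ofReal ∘ hM.eigenvalues)), ← hM.spectral_theorem]
    congr 1
    rw [Matrix.mul_smul, Matrix.smul_mul, mul_one, hU]
  rw [key]
  refine PosSemidef.mul_mul_conjTranspose_same ?_ _
  refine posSemidef_diagonal_iff.mpr fun i => ?_
  rw [Complex.zero_le_real]
  linarith [hC i]

lemma aux_rayleigh_ub {n : ℕ} {M : Matrix (Fin n) (Fin n) ℂ} (hM : M.IsHermitian) {C : ℝ}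
    (hC : ∀ i, hM.eigenvalues i ≤ C) (y : Fin n → ℂ) :
    (star y ⬝ᵥ M *ᵥ y).re ≤ C * (star y ⬝ᵥ y).re := by
  have h := (aux_smul_sub_psd hM hC).re_dotProduct_nonneg y
  have hexp : star y ⬝ᵥ ((C : ℂ) • 1 - M) *ᵥ y
      = (C : ℂ) * (star y ⬝ᵥ y) - star y ⬝ᵥ M *ᵥ y := by
    rw [Matrix.sub_mulVec, dotProduct_sub, smul_mulVec, one_mulVec,
      dotProduct_smul, smul_eq_mul]
  rw [hexp] at h
  simp only [RCLike.re_to_complex, Complex.sub_re, Complex.mul_re, Complex.ofReal_re,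
    Complex.ofReal_im, zero_mul, sub_zero] at h
  linarith

/-- Rayleigh-quotient bound for the preconditioned kernel-compensation system: with
P = K_A K_A† + γ K_B positive definite (K_B Hermitian PSD, γ > 0) and M̂ HPD with
λ_min(M̂) ≤ 1 ≤ λ_max(M̂), the generalized Rayleigh quotient
ρ(x) = (x†(K_A M̂ K_A† + γ K_B)x)/(x†(K_A K_A† + γ K_B)x) lies in [λ_min(M̂), λ_max(M̂)]
for every nonzero x; consequently the condition number of P⁻¹(K_A M̂ K_A† + γ K_B)
(the ratio of the largest to the smallest modulus of its spectrum) is at most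
λ_max(M̂)/λ_min(M̂). -/
theorem preconditioned_condition_number_bound (n : ℕ)
    (KA KB Mhat : Matrix (Fin n) (Fin n) ℂ)
    (γ : ℝ) (hγ : 0 < γ)
    (hKB : KB.PosSemidef)
    (hP : (KA * KAᴴ + (γ : ℂ) • KB).PosDef)
    (hMhat : Mhat.PosDef) (hherm : Mhat.IsHermitian)
    (hlo : (⨅ i, hherm.eigenvalues i) ≤ 1)
    (hhi : 1 ≤ ⨆ i, hherm.eigenvalues i) :
    (∀ x : Fin n → ℂ, x ≠ 0 →
      (⨅ i, hherm.eigenvalues i)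
          ≤ (star x ⬝ᵥ (KA * Mhat * KAᴴ + (γ : ℂ) • KB).mulVec x).re /
            (star x ⬝ᵥ (KA * KAᴴ + (γ : ℂ) • KB).mulVec x).re ∧
        (star x ⬝ᵥ (KA * Mhat * KAᴴ + (γ : ℂ) • KB).mulVec x).re /
            (star x ⬝ᵥ (KA * KAᴴ + (γ : ℂ) • KB).mulVec x).re
          ≤ ⨆ i, hherm.eigenvalues i) ∧
    (∀ μ ν : ℂ,
      μ ∈ spectrum ℂ ((KA * KAᴴ + (γ : ℂ) • KB)⁻¹ * (KA * Mhat * KAᴴ + (γ : ℂ) • KB)) →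
      ν ∈ spectrum ℂ ((KA * KAᴴ + (γ : ℂ) • KB)⁻¹ * (KA * Mhat * KAᴴ + (γ : ℂ) • KB)) →
      ν ≠ 0 →
      ‖μ‖ / ‖ν‖
        ≤ (⨆ i, hherm.eigenvalues i) / (⨅ i, hherm.eigenvalues i)) := by
  rcases isEmpty_or_nonempty (Fin n) with he | hne
  · exfalso
    haveI := he
    rw [Real.iSup_of_isEmpty] at hhi
    norm_num at hhi
  set c := ⨅ i, hherm.eigenvalues i with hc_def
  set C := ⨆ i, hherm.eigenvalues i with hC_def
  set P := KA * KAᴴ + (γ : ℂ) • KB with hPdef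
  set Q := KA * Mhat * KAᴴ + (γ : ℂ) • KB with hQdef
  have hlo' : ∀ i, c ≤ hherm.eigenvalues i := fun i =>
    ciInf_le (Finite.bddBelow_range _) i
  have hhi' : ∀ i, hherm.eigenvalues i ≤ C := fun i =>
    le_ciSup (Finite.bddAbove_range _) i
  -- the key quadratic-form inequalities
  have key : ∀ x : Fin n → ℂ,
      c * (star x ⬝ᵥ P *ᵥ x).re ≤ (star x ⬝ᵥ Q *ᵥ x).re ∧
      (star x ⬝ᵥ Q *ᵥ x).re ≤ C * (star x ⬝ᵥ P *ᵥ x).re := by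
    intro x
    have hQx : star x ⬝ᵥ Q *ᵥ x
        = star (KAᴴ *ᵥ x) ⬝ᵥ Mhat *ᵥ (KAᴴ *ᵥ x) + (γ : ℂ) * (star x ⬝ᵥ KB *ᵥ x) := by
      rw [hQdef, add_mulVec, dotProduct_add, aux_dot_conj, smul_mulVec,
        dotProduct_smul, smul_eq_mul]
    have hPx : star x ⬝ᵥ P *ᵥ x
        = star (KAᴴ *ᵥ x) ⬝ᵥ (KAᴴ *ᵥ x) + (γ : ℂ) * (star x ⬝ᵥ KB *ᵥ x) := by
      have h1 : KA * KAᴴ = KA * 1 * KAᴴ := by rw [mul_one]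
      rw [hPdef, h1, add_mulVec, dotProduct_add, aux_dot_conj, one_mulVec,
        smul_mulVec, dotProduct_smul, smul_eq_mul]
    have ht : 0 ≤ (star x ⬝ᵥ KB *ᵥ x).re := by
      have := hKB.re_dotProduct_nonneg x
      simpa using this
    have h1 := aux_rayleigh_lb hherm hlo' (KAᴴ *ᵥ x)
    have h2 := aux_rayleigh_ub hherm hhi' (KAᴴ *ᵥ x)
    rw [hQx, hPx]
    simp only [Complex.add_re, Complex.mul_re, Complex.ofReal_re, Complex.ofReal_im,
      zero_mul, sub_zero]
    constructor
    · nlinarith [mul_nonneg (sub_nonneg.mpr hlo) (mul_nonneg hγ.le ht)]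
    · nlinarith [mul_nonneg (sub_nonneg.mpr hhi) (mul_nonneg hγ.le ht)]
  constructor
  · intro x hx
    have hD : 0 < (star x ⬝ᵥ P *ᵥ x).re := by
      have := hP.re_dotProduct_pos hx
      simpa using this
    exact ⟨(le_div_iff₀ hD).mpr (key x).1, (div_le_iff₀ hD).mpr (key x).2⟩
  · have hcpos : 0 < c := by
      obtain ⟨i, hi⟩ := exists_eq_ciInf_of_finite (f := hherm.eigenvalues)
      rw [hc_def, ← hi]
      exact hMhat.eigenvalues_pos i
    have hCpos : (0 : ℝ) < C := lt_of_lt_of_le one_pos hhi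
    have hQherm : Q.IsHermitian := by
      have h1 : (KA * Mhat * KAᴴ).IsHermitian :=
        (hMhat.posSemidef.mul_mul_conjTranspose_same KA).1
      have h2 : ((γ : ℂ) • KB).IsHermitian := by
        rw [Matrix.IsHermitian, conjTranspose_smul, hKB.1.eq]
        congr 1
        simp [Complex.star_def, Complex.conj_ofReal]
      exact h1.add h2
    have hPdetU : IsUnit P.det := (Matrix.isUnit_iff_isUnit_det P).mp hP.isUnit
    have spec : ∀ μ : ℂ, μ ∈ spectrum ℂ (P⁻¹ * Q) →
        μ.im = 0 ∧ c ≤ μ.re ∧ μ.re ≤ C := by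
      intro μ hμ
      rw [← AlgEquiv.spectrum_eq (Matrix.toLinAlgEquiv' (R := ℂ) (n := Fin n))] at hμ
      obtain ⟨v, hv⟩ :=
        (Module.End.hasEigenvalue_iff_mem_spectrum.mpr hμ).exists_hasEigenvector
      have hv0 : v ≠ 0 := hv.2
      have heig : (P⁻¹ * Q) *ᵥ v = μ • v := by
        have h := hv.apply_eq_smul
        rwa [Matrix.toLinAlgEquiv'_apply] at h
      have hQv : Q *ᵥ v = μ • (P *ᵥ v) := by
        calc Q *ᵥ v = (P * P⁻¹ * Q) *ᵥ v := by
              rw [Matrix.mul_nonsing_inv P hPdetU, one_mul]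
          _ = P *ᵥ ((P⁻¹ * Q) *ᵥ v) := by rw [mulVec_mulVec, mul_assoc]
          _ = P *ᵥ (μ • v) := by rw [heig]
          _ = μ • (P *ᵥ v) := by rw [mulVec_smul]
      have hzP := hP.dotProduct_mulVec_pos hv0
      rw [Complex.lt_def] at hzP
      have hare : 0 < (star v ⬝ᵥ P *ᵥ v).re := by simpa using hzP.1
      have haim : (star v ⬝ᵥ P *ᵥ v).im = 0 := by
        have h := hzP.2
        simpa using h.symm
      have hbim : (star v ⬝ᵥ Q *ᵥ v).im = 0 := aux_herm_dot_im hQherm v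
      have hb : star v ⬝ᵥ Q *ᵥ v = μ * (star v ⬝ᵥ P *ᵥ v) := by
        rw [hQv, dotProduct_smul, smul_eq_mul]
      have him : μ.im = 0 := by
        have h := congrArg Complex.im hb
        rw [Complex.mul_im, haim, hbim, mul_zero, zero_add] at h
        rcases mul_eq_zero.mp h.symm with h' | h'
        · exact h'
        · exact absurd h' hare.ne'
      have hre : (star v ⬝ᵥ Q *ᵥ v).re = μ.re * (star v ⬝ᵥ P *ᵥ v).re := by
        have h := congrArg Complex.re hb
        rw [Complex.mul_re, haim, mul_zero, sub_zero] at h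
        exact h
      refine ⟨him, ?_, ?_⟩
      · have h := (key v).1
        rw [hre] at h
        exact (mul_le_mul_iff_left₀ hare).mp h
      · have h := (key v).2
        rw [hre] at h
        exact (mul_le_mul_iff_left₀ hare).mp h
    intro μ ν hμ hν hν0
    obtain ⟨hμim, hμlo, hμhi⟩ := spec μ hμ
    obtain ⟨hνim, hνlo, hνhi⟩ := spec ν hν
    have hμabs : ‖μ‖ ≤ C := by
      have : μ = ((μ.re : ℝ) : ℂ) := Complex.ext rfl (by simpa using hμim)
      rw [this, Complex.norm_real, Real.norm_eq_abs, abs_of_nonneg (le_trans hcpos.le hμlo)]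
      exact hμhi
    have hνabs : c ≤ ‖ν‖ := by
      have : ν = ((ν.re : ℝ) : ℂ) := Complex.ext rfl (by simpa using hνim)
      rw [this, Complex.norm_real, Real.norm_eq_abs, abs_of_nonneg (le_trans hcpos.le hνlo)]
      exact hνlo
    exact div_le_div₀ hCpos.le hμabs hcpos hνabs
end
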